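/- Let h : ℝ^n → ℝ be Lipschitz with constant L_h along the trajectory of ẋ = f(x) starting at x_k, where f is Lipschitz with constant L_f along this trajectory. If h(x_k) ≥ ζ_b > 0 and τ ≤ (1/L_f)·ln(1 + L_f ζ_b / (L_h ‖f(x_k)‖)), then h(x(t_k+s)) ≥ 0 for all s ∈ [0, τ). -/
import Mathlib

open Set

/-- Barrier-value persistence: if `h` is `L_h`-Lipschitz along the trajectory of
`ẋ = f(x)` starting at `x_k`, `f` is `L_f`-Lipschitz along this trajectory,
`h(x_k) ≥ ζ_b > 0`, and `τ ≤ (1/L_f)·ln(1 + L_f ζ_b/(L_h ‖f(x_k)‖))`, then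
`h(x(t_k+s)) ≥ 0` for all `s ∈ [0, τ)`. -/
theorem barrier_persists_over_triggering_interval {n : ℕ}
    (f : EuclideanSpace ℝ (Fin n) → EuclideanSpace ℝ (Fin n))
    (h : EuclideanSpace ℝ (Fin n) → ℝ)
    (x : ℝ → EuclideanSpace ℝ (Fin n)) (tk τ Lf Lh ζb : ℝ)
    (hLf : 0 < Lf) (hLh : 0 < Lh) (hζb : 0 < ζb) (hτpos : 0 < τ)
    (xk : EuclideanSpace ℝ (Fin n)) (hinit : x tk = xk) (hfk : 0 < ‖f xk‖)
    (hode : ∀ t ∈ Ico tk (tk + τ), HasDerivAt x (f (x t)) t)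
    (hflip : ∀ s ∈ Ico (0:ℝ) τ, ‖f (x (tk + s)) - f xk‖ ≤ Lf * ‖x (tk + s) - xk‖)
    (hhlip : ∀ s ∈ Ico (0:ℝ) τ, |h (x (tk + s)) - h xk| ≤ Lh * ‖x (tk + s) - xk‖)
    (hhk : ζb ≤ h xk)
    (hτ : τ ≤ (1 / Lf) * Real.log (1 + Lf * ζb / (Lh * ‖f xk‖))) :
    ∀ s ∈ Ico (0:ℝ) τ, 0 ≤ h (x (tk + s)) := by
  intro s hs
  obtain ⟨hs0, hsτ⟩ := hs
  -- Grönwall bound on ‖x (tk+s) - xk‖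
  have key : ‖x (tk + s) - xk‖ ≤ ‖f xk‖ / Lf * (Real.exp (Lf * s) - 1) := by
    have hmem : ∀ t ∈ Icc tk (tk + s), t ∈ Ico tk (tk + τ) := by
      intro t ht
      exact ⟨ht.1, lt_of_le_of_lt ht.2 (by linarith)⟩
    have hcont : ContinuousOn (fun t => x t - xk) (Icc tk (tk + s)) := by
      intro t ht
      exact (((hode t (hmem t ht)).continuousAt).continuousWithinAt).sub
        continuousWithinAt_const
    have hderiv : ∀ t ∈ Ico tk (tk + s),
        HasDerivWithinAt (fun t => x t - xk) (f (x t)) (Ici t) t := by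
      intro t ht
      have := (hode t ⟨ht.1, lt_of_lt_of_le ht.2 (by linarith)⟩).sub_const xk
      exact this.hasDerivWithinAt
    have ha : ‖x tk - xk‖ ≤ 0 := by simp [hinit]
    have hbd : ∀ t ∈ Ico tk (tk + s),
        ‖f (x t)‖ ≤ Lf * ‖x t - xk‖ + ‖f xk‖ := by
      intro t ht
      have ht' : t - tk ∈ Ico (0:ℝ) τ := by
        constructor <;> [linarith [ht.1]; linarith [ht.2]]
      have := hflip (t - tk) ht'
      rw [show tk + (t - tk) = t by ring] at this
      have htri : ‖f (x t)‖ ≤ ‖f (x t) - f xk‖ + ‖f xk‖ := by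
        simpa using norm_add_le (f (x t) - f xk) (f xk)
      linarith
    have := norm_le_gronwallBound_of_norm_deriv_right_le hcont hderiv ha hbd
      (tk + s) ⟨by linarith, le_refl _⟩
    rw [gronwallBound_of_K_ne_0 (ne_of_gt hLf)] at this
    simpa [show tk + s - tk = s by ring] using this
  -- turn to bound on exp
  have hexp : Real.exp (Lf * s) < 1 + Lf * ζb / (Lh * ‖f xk‖) := by
    have hpos : 0 < 1 + Lf * ζb / (Lh * ‖f xk‖) := by positivity
    have hlog : Lf * s < Real.log (1 + Lf * ζb / (Lh * ‖f xk‖)) := by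
      have : Lf * τ ≤ Real.log (1 + Lf * ζb / (Lh * ‖f xk‖)) := by
        have := mul_le_mul_of_nonneg_left hτ (le_of_lt hLf)
        rwa [one_div, mul_inv_cancel_left₀ (ne_of_gt hLf)] at this
      nlinarith
    calc Real.exp (Lf * s) < Real.exp (Real.log (1 + Lf * ζb / (Lh * ‖f xk‖))) :=
          Real.exp_lt_exp.mpr hlog
      _ = _ := Real.exp_log hpos
  -- conclude
  have hh := hhlip s ⟨hs0, hsτ⟩
  have h1 : h xk - h (x (tk + s)) ≤ Lh * ‖x (tk + s) - xk‖ := by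
    have := neg_abs_le (h (x (tk + s)) - h xk)
    linarith
  have h2 : Lh * ‖x (tk + s) - xk‖ ≤ Lh * (‖f xk‖ / Lf * (Real.exp (Lf * s) - 1)) :=
    mul_le_mul_of_nonneg_left key (le_of_lt hLh)
  have h3 : Lh * (‖f xk‖ / Lf * (Real.exp (Lf * s) - 1)) ≤ ζb := by
    have hLF : 0 < Lh * ‖f xk‖ := by positivity
    have hE : (Real.exp (Lf * s) - 1) * (Lh * ‖f xk‖) ≤ Lf * ζb :=
      le_of_lt ((lt_div_iff₀ hLF).mp (by linarith))
    rw [div_mul_eq_mul_div, mul_div_assoc', div_le_iff₀ hLf]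
    nlinarith
  linarith
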